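/- Let F be a forest on I and V', V'' ⊆ V(F) two sets of inner vertices such that no leaf of F is an ancestor-leaf of both a vertex in V' and a vertex in V''. Then the set γ(F, V' ⊔ V'') is in natural bijection with γ(F, V') × γ(F, V''), where γ(F, V) denotes the set of forests F' ≤ F whose inner vertices are identified (via the order-defining injection) with V. -/

import Mathlib

/-! A forest in `γ(F, V' ∪ V'')` is split into the clades lying under `V'` and those lying under
`V''`; each part is again a forest, lying in `γ(F, V')` resp. `γ(F, V'')`. Conversely two such
forests have pairwise disjoint clades, so their union is a forest, and it lies in
`γ(F, V' ∪ V'')`. Every clade is nonempty, so no clade can lie under both `V'` and `V''`, which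
makes splitting and gluing mutually inverse. -/

open Finset

/-- A forest of leaf-labeled rooted binary trees on a ground set of labels,
encoded by the family of "clades": for each inner vertex, the set of its
ancestor leaves. Laminarity plus the binary splitting condition exactly
characterize such forests, and inner vertices correspond bijectively to clades. -/
structure Forest (I : Type*) [DecidableEq I] where
  ground : Finset I
  clades : Finset (Finset I)
  subset_ground : ∀ C ∈ clades, C ⊆ ground
  laminar : ∀ C ∈ clades, ∀ D ∈ clades, C ⊆ D ∨ D ⊆ C ∨ Disjoint C D
  binary : ∀ C ∈ clades, ∃ A B : Finset I,
      (A ∈ clades ∨ ∃ x, A = {x}) ∧ (B ∈ clades ∨ ∃ x, B = {x}) ∧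
      Disjoint A B ∧ A ∪ B = C ∧ A ≠ C ∧ B ≠ C

namespace Forest

variable {I : Type*} [DecidableEq I]

/-- The partial order on forests of the paper: `F' ≤ F` iff there is an injection
of the inner vertices of `F'` into those of `F` which enlarges ancestor-leaf sets
and preserves the ancestor relation among inner vertices. -/
def Le (F' F : Forest I) : Prop :=
  F'.ground = F.ground ∧ ∃ φ : Finset I → Finset I,
    Set.InjOn φ (F'.clades : Set (Finset I)) ∧
    (∀ C ∈ F'.clades, φ C ∈ F.clades) ∧
    (∀ C ∈ F'.clades, C ⊆ φ C) ∧
    (∀ C ∈ F'.clades, ∀ D ∈ F'.clades, C ⊆ D → φ C ⊆ φ D)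

/-- `γ(F,V)`: the set of forests `F' ≤ F` whose inner vertices are identified,
via the order-defining injection, with the subset `V` of inner vertices of `F`. -/
def gamma (F : Forest I) (V : Finset (Finset I)) : Set (Forest I) :=
  {F' | F'.ground = F.ground ∧ ∃ φ : Finset I → Finset I,
    Set.InjOn φ (F'.clades : Set (Finset I)) ∧
    (∀ C ∈ F'.clades, φ C ∈ F.clades) ∧
    (∀ C ∈ F'.clades, C ⊆ φ C) ∧
    (∀ C ∈ F'.clades, ∀ D ∈ F'.clades, C ⊆ D → φ C ⊆ φ D) ∧
    F'.clades.image φ = V}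

/-- A forest consisting of a single tree. -/
def IsTree (F : Forest I) : Prop :=
  F.ground.Nonempty ∧ (F.ground ∈ F.clades ∨ F.ground.card = 1)

/-- The support: leaves whose path to the root contains at least one inner vertex. -/
def supp (F : Forest I) : Finset I := F.clades.sup id

/-- The leaf-label sets of the trees of the forest: maximal clades together with
the singletons of labels not lying in any clade. -/
def rootBlocks (F : Forest I) : Finset (Finset I) :=
  F.clades.filter (fun C => ∀ D ∈ F.clades, C ⊆ D → C = D) ∪
  (F.ground.filter (fun x => ∀ C ∈ F.clades, x ∉ C)).image
    (fun x => ({x} : Finset I))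

end Forest

namespace Forest

section Separated

variable {I : Type*}

def Separated (V W : Finset (Finset I)) : Prop :=
  ∀ C ∈ V, ∀ D ∈ W, Disjoint C D

theorem Separated.symm {V W : Finset (Finset I)} (h : Separated V W) : Separated W V :=
  fun C hC D hD => (h D hD C hC).symm

theorem Separated.eq_empty_of_subset {V W : Finset (Finset I)} (h : Separated V W)
    {C D₁ D₂ : Finset I} (hD₁ : D₁ ∈ V) (hD₂ : D₂ ∈ W) (h₁ : C ⊆ D₁) (h₂ : C ⊆ D₂) : C = ∅ :=
  (disjoint_self_iff_empty _).1 ((h D₁ hD₁ D₂ hD₂).mono h₁ h₂)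

end Separated

variable {I : Type*} [DecidableEq I]

theorem ext {F G : Forest I} (hg : F.ground = G.ground) (hc : F.clades = G.clades) : F = G := by
  cases F; cases G; simp_all

theorem nonempty_of_mem_clades (F : Forest I) {C : Finset I} (hC : C ∈ F.clades) :
    C.Nonempty := by
  obtain ⟨A, B, -, -, -, hAB, hA, -⟩ := F.binary C hC
  rw [nonempty_iff_ne_empty]
  rintro rfl
  exact hA (union_eq_empty.1 hAB).1

theorem exists_superset_of_mem_gamma {F F' : Forest I} {V : Finset (Finset I)}
    (hF' : F' ∈ gamma F V) {C : Finset I} (hC : C ∈ F'.clades) : ∃ D ∈ V, C ⊆ D := by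
  obtain ⟨-, φ, -, -, hsub, -, himg⟩ := hF'
  exact ⟨φ C, himg ▸ mem_image_of_mem φ hC, hsub C hC⟩

theorem Separated.clades_of_mem_gamma {F F₁ F₂ : Forest I} {V W : Finset (Finset I)}
    (h : Separated V W) (h₁ : F₁ ∈ gamma F V) (h₂ : F₂ ∈ gamma F W) :
    Separated F₁.clades F₂.clades := fun C hC D hD => by
  obtain ⟨E₁, hE₁, hCE₁⟩ := exists_superset_of_mem_gamma h₁ hC
  obtain ⟨E₂, hE₂, hDE₂⟩ := exists_superset_of_mem_gamma h₂ hD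
  exact (h E₁ hE₁ E₂ hE₂).mono hCE₁ hDE₂

theorem Separated.not_subset_of_mem_gamma {F F' : Forest I} {V W : Finset (Finset I)}
    (h : Separated V W) (hF' : F' ∈ gamma F W) {C D : Finset I} (hC : C ∈ F'.clades)
    (hD : D ∈ V) : ¬ C ⊆ D := fun hCD => by
  obtain ⟨E, hE, hCE⟩ := exists_superset_of_mem_gamma hF' hC
  exact (F'.nonempty_of_mem_clades hC).ne_empty (h.eq_empty_of_subset hD hE hCD hCE)

open Classical in
noncomputable def restrict (F : Forest I) (V : Finset (Finset I)) : Forest I where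
  ground := F.ground
  clades := F.clades.filter fun C => ∃ D ∈ V, C ⊆ D
  subset_ground C hC := F.subset_ground C (mem_filter.1 hC).1
  laminar C hC D hD := F.laminar C (mem_filter.1 hC).1 D (mem_filter.1 hD).1
  binary C hC := by
    obtain ⟨hC, D, hD, hCD⟩ := mem_filter.1 hC
    obtain ⟨A, B, hA, hB, hAB, hun, hAne, hBne⟩ := F.binary C hC
    have lift : ∀ {X}, X ⊆ C → (X ∈ F.clades ∨ ∃ x, X = {x}) →
        (X ∈ F.clades.filter fun C => ∃ D ∈ V, C ⊆ D) ∨ ∃ x, X = {x} := fun hXC hX =>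
      hX.imp_left fun hX => mem_filter.2 ⟨hX, D, hD, hXC.trans hCD⟩
    exact ⟨A, B, lift (hun ▸ subset_union_left) hA, lift (hun ▸ subset_union_right) hB,
      hAB, hun, hAne, hBne⟩

theorem restrict_clades (F : Forest I) (V : Finset (Finset I))
    [DecidablePred fun C : Finset I ↦ ∃ D ∈ V, C ⊆ D] :
    (F.restrict V).clades = F.clades.filter fun C => ∃ D ∈ V, C ⊆ D := by
  simp only [restrict]
  congr

def glue (F₁ F₂ : Forest I) (hg : F₂.ground = F₁.ground)
    (hdis : Separated F₁.clades F₂.clades) : Forest I where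
  ground := F₁.ground
  clades := F₁.clades ∪ F₂.clades
  subset_ground := forall_mem_union.2
    ⟨F₁.subset_ground, fun C hC => hg ▸ F₂.subset_ground C hC⟩
  laminar C hC D hD := by
    rcases mem_union.1 hC with h₁ | h₁ <;> rcases mem_union.1 hD with h₂ | h₂
    · exact F₁.laminar C h₁ D h₂
    · exact Or.inr (Or.inr (hdis C h₁ D h₂))
    · exact Or.inr (Or.inr (hdis D h₂ C h₁).symm)
    · exact F₂.laminar C h₁ D h₂
  binary C hC := by
    rcases mem_union.1 hC with h | h
    · obtain ⟨A, B, hA, hB, hAB⟩ := F₁.binary C h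
      exact ⟨A, B, hA.imp_left (mem_union_left _), hB.imp_left (mem_union_left _), hAB⟩
    · obtain ⟨A, B, hA, hB, hAB⟩ := F₂.binary C h
      exact ⟨A, B, hA.imp_left (mem_union_right _), hB.imp_left (mem_union_right _), hAB⟩

theorem glue_clades (F₁ F₂ : Forest I) (hg : F₂.ground = F₁.ground)
    (hdis : Separated F₁.clades F₂.clades) : (glue F₁ F₂ hg hdis).clades = F₁.clades ∪ F₂.clades :=
  rfl

theorem glue_ground (F₁ F₂ : Forest I) (hg : F₂.ground = F₁.ground)
    (hdis : Separated F₁.clades F₂.clades) : (glue F₁ F₂ hg hdis).ground = F₁.ground :=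
  rfl

theorem glue_comm (F₁ F₂ : Forest I) (hg : F₂.ground = F₁.ground)
    (hdis : Separated F₁.clades F₂.clades) :
    glue F₁ F₂ hg hdis = glue F₂ F₁ hg.symm hdis.symm :=
  ext hg.symm (union_comm _ _)

section Splitting

variable {F : Forest I} {V W : Finset (Finset I)}

theorem restrict_mem_gamma (h : Separated V W) {F' : Forest I} (hF' : F' ∈ gamma F (V ∪ W)) :
    F'.restrict V ∈ gamma F V := by
  classical
  obtain ⟨hg, φ, hinj, hmem, hsub, hmono, himg⟩ := hF'
  have hcl : (F'.restrict V).clades ⊆ F'.clades := by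
    rw [restrict_clades]; exact filter_subset _ _
  refine ⟨hg, φ, hinj.mono (coe_subset.2 hcl), fun C hC => hmem C (hcl hC),
    fun C hC => hsub C (hcl hC), fun C hC D hD => hmono C (hcl hC) D (hcl hD), ?_⟩
  ext E
  simp only [restrict_clades, mem_image, mem_filter]
  constructor
  · rintro ⟨C, ⟨hC, D, hD, hCD⟩, rfl⟩
    have hφC : φ C ∈ V ∪ W := himg ▸ mem_image_of_mem φ hC
    refine (mem_union.1 hφC).resolve_right fun hW => ?_
    exact (F'.nonempty_of_mem_clades hC).ne_empty (h.eq_empty_of_subset hD hW hCD (hsub C hC))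
  · intro hE
    obtain ⟨C, hC, rfl⟩ := mem_image.1 (himg ▸ mem_union_left W hE)
    exact ⟨C, ⟨hC, φ C, hE, hsub C hC⟩, rfl⟩

theorem clades_eq_union_restrict {F' : Forest I} (hF' : F' ∈ gamma F (V ∪ W)) :
    F'.clades = (F'.restrict V).clades ∪ (F'.restrict W).clades := by
  classical
  rw [restrict_clades, restrict_clades, ← filter_or, eq_comm, filter_true_of_mem]
  intro C hC
  obtain ⟨D, hD, hCD⟩ := exists_superset_of_mem_gamma hF' hC
  exact (mem_union.1 hD).imp (fun hD => ⟨D, hD, hCD⟩) fun hD => ⟨D, hD, hCD⟩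

theorem glue_mem_gamma (h : Separated V W) {F₁ F₂ : Forest I} (h₁ : F₁ ∈ gamma F V)
    (h₂ : F₂ ∈ gamma F W) (hg : F₂.ground = F₁.ground) (hdis : Separated F₁.clades F₂.clades) :
    glue F₁ F₂ hg hdis ∈ gamma F (V ∪ W) := by
  classical
  obtain ⟨hg₁, φ₁, hinj₁, hmem₁, hsub₁, hmono₁, himg₁⟩ := h₁
  obtain ⟨-, φ₂, hinj₂, hmem₂, hsub₂, hmono₂, himg₂⟩ := h₂
  have hF₁ : ∀ {C}, C ∈ F₁.clades → C ≠ ∅ := fun hC => (F₁.nonempty_of_mem_clades hC).ne_empty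
  have hF₂ : ∀ {C}, C ∈ F₂.clades → C ≠ ∅ := fun hC => (F₂.nonempty_of_mem_clades hC).ne_empty
  have hnot : ∀ C ∈ F₂.clades, C ∉ F₁.clades := fun C hC₂ hC₁ =>
    hF₁ hC₁ ((disjoint_self_iff_empty _).1 (hdis C hC₁ C hC₂))
  set φ := F₁.clades.piecewise φ₁ φ₂
  have e₁ : ∀ C ∈ F₁.clades, φ C = φ₁ C := fun C hC => piecewise_eq_of_mem _ _ _ hC
  have e₂ : ∀ C ∈ F₂.clades, φ C = φ₂ C := fun C hC => piecewise_eq_of_notMem _ _ _ (hnot C hC)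
  rw [gamma, Set.mem_ofPred_eq, glue_clades, glue_ground]
  refine ⟨hg₁, φ, ?_, forall_mem_union.2 ⟨fun C hC => e₁ C hC ▸ hmem₁ C hC,
    fun C hC => e₂ C hC ▸ hmem₂ C hC⟩, forall_mem_union.2 ⟨fun C hC => e₁ C hC ▸ hsub₁ C hC,
    fun C hC => e₂ C hC ▸ hsub₂ C hC⟩, ?_, ?_⟩
  · rw [coe_union, Set.injOn_union (disjoint_coe.2 (disjoint_left.2 fun C h₁ h₂ => hnot C h₂ h₁))]
    refine ⟨hinj₁.congr fun C hC => (e₁ C hC).symm, hinj₂.congr fun C hC => (e₂ C hC).symm,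
      fun C hC D hD hφ => hF₁ hC ?_⟩
    rw [e₁ C hC, e₂ D hD] at hφ
    exact h.eq_empty_of_subset (himg₁ ▸ mem_image_of_mem φ₁ hC)
      (himg₂ ▸ mem_image_of_mem φ₂ hD) (hsub₁ C hC) (hφ ▸ hsub₁ C hC)
  · intro C hC D hD hCD
    rcases mem_union.1 hC with hC | hC <;> rcases mem_union.1 hD with hD | hD
    · rw [e₁ C hC, e₁ D hD]; exact hmono₁ C hC D hD hCD
    · exact absurd ((hdis C hC D hD).eq_bot_of_le hCD) (hF₁ hC)
    · exact absurd ((hdis D hD C hC).symm.eq_bot_of_le hCD) (hF₂ hC)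
    · rw [e₂ C hC, e₂ D hD]; exact hmono₂ C hC D hD hCD
  · rw [image_union, image_congr e₁, image_congr e₂, himg₁, himg₂]

theorem restrict_glue (h : Separated V W) {F₁ F₂ : Forest I} (h₁ : F₁ ∈ gamma F V)
    (h₂ : F₂ ∈ gamma F W) (hg : F₂.ground = F₁.ground) (hdis : Separated F₁.clades F₂.clades) :
    (glue F₁ F₂ hg hdis).restrict V = F₁ := by
  classical
  refine ext rfl ?_
  rw [restrict_clades, glue_clades, filter_union, filter_true_of_mem
    (fun C hC => exists_superset_of_mem_gamma h₁ hC), filter_false_of_mem, union_empty]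
  rintro C hC ⟨D, hD, hCD⟩
  exact h.not_subset_of_mem_gamma h₂ hC hD hCD

noncomputable def gammaUnionEquiv (h : Separated V W) :
    gamma F (V ∪ W) ≃ gamma F V × gamma F W where
  toFun F' := (⟨F'.1.restrict V, restrict_mem_gamma h F'.2⟩,
    ⟨F'.1.restrict W, restrict_mem_gamma h.symm (union_comm V W ▸ F'.2)⟩)
  invFun F₁₂ := ⟨_, glue_mem_gamma h F₁₂.1.2 F₁₂.2.2 (F₁₂.2.2.1.trans F₁₂.1.2.1.symm)
    (h.clades_of_mem_gamma F₁₂.1.2 F₁₂.2.2)⟩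
  left_inv F' := Subtype.ext (ext rfl (clades_eq_union_restrict F'.2).symm)
  right_inv F₁₂ := by
    obtain ⟨⟨F₁, h₁⟩, ⟨F₂, h₂⟩⟩ := F₁₂
    have hg : F₂.ground = F₁.ground := h₂.1.trans h₁.1.symm
    have hdis := h.clades_of_mem_gamma h₁ h₂
    refine Prod.ext (Subtype.ext ?_) (Subtype.ext ?_)
    · exact restrict_glue h h₁ h₂ hg hdis
    · exact (congrArg (restrict · W) (glue_comm F₁ F₂ hg hdis)).trans
        (restrict_glue h.symm h₂ h₁ hg.symm hdis.symm)

end Splitting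

end Forest

theorem stmt_9_general (I : Type*) [DecidableEq I] (F : Forest I)
    (V' V'' : Finset (Finset I))
    (hdisj : ∀ C ∈ V', ∀ D ∈ V'', Disjoint C D) :
    Nonempty ((Forest.gamma F (V' ∪ V'')) ≃
      (Forest.gamma F V') × (Forest.gamma F V'')) :=
  ⟨Forest.gammaUnionEquiv hdisj⟩

/-- if `V'` and `V''` are sets of inner vertices of `F` having no
common ancestor-leaf (i.e. the corresponding clades are pairwise disjoint), then
`γ(F, V' ⊔ V'')` is in bijection with `γ(F,V') × γ(F,V'')`. -/
theorem stmt_9 (I : Type*) [DecidableEq I] (F : Forest I)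
    (V' V'' : Finset (Finset I)) (h' : V' ⊆ F.clades) (h'' : V'' ⊆ F.clades)
    (hdisj : ∀ C ∈ V', ∀ D ∈ V'', Disjoint C D) :
    Nonempty ((Forest.gamma F (V' ∪ V'')) ≃
      (Forest.gamma F V') × (Forest.gamma F V'')) :=
  stmt_9_general I F V' V'' hdisj
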